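/- arXiv:1509.06897 — 3 statements merged into one kernel-verified Lean document; each statement's English description precedes it below -/
import Mathlib

section
/- If A is a commutative ring containing the rational numbers (a Q-algebra) and M is an A-module, then for every n > 0 the Koszul complex Kos(M)_n and the De Rham complex DeRham(M)_n are homotopically trivial complexes of A-modules; in particular both are acyclic (exact). -/
/-!
Let `D` be the Euler derivation. On forms `b₀ db₁ ∧ ⋯ ∧ db_p` with homogeneous `bᵢ`, the Cartan
formula `d ∘ i_D + i_D ∘ d = L_D` holds, and the Lie derivative `L_D` acts as multiplication by
the total degree. So on the degree-`n` parts, `d ∘ i_D + i_D ∘ d = n`, and once `n` is invertible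
`n⁻¹ d` contracts `Kos(M)ₙ` and `n⁻¹ i_D` contracts `DeRham(M)ₙ`. A complex whose identity is
homotopic to zero has zero homology.
-/

open scoped TensorProduct
open CategoryTheory

universe u

/-- `ι : M →ₗ[A] B` exhibits the commutative `A`-algebra `B` as the symmetric algebra of the
`A`-module `M`. -/
def IsSymmetricAlgebra' {A B M : Type u} [CommRing A] [CommRing B] [Algebra A B]
    [AddCommGroup M] [Module A M] (ι : M →ₗ[A] B) : Prop :=
  ∀ (C : Type u) [CommRing C] [Algebra A C] (f : M →ₗ[A] C),
    ∃! g : B →ₐ[A] C, ∀ m : M, g (ι m) = f m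

variable {A B M : Type u} [CommRing A] [CommRing B] [Algebra A B]
  [AddCommGroup M] [Module A M]

/-- The element `d c₁ ∧ ⋯ ∧ d c_p` of `Ω^p_{B/A} = ⋀^p_B Ω_{B/A}`. -/
noncomputable def wedgeD (p : ℕ) (c : Fin p → B) : (⋀[B]^p (Ω[B⁄A]) : Submodule B _) :=
  ⟨ExteriorAlgebra.ιMulti B p (fun i => KaehlerDifferential.D A B (c i)),
    ExteriorAlgebra.ιMulti_range B p (Set.mem_range_self _)⟩

/-- The degree-`m` homogeneous component of `Ω^p_{B/A}`. -/
noncomputable def kaehlerPowerPiece (𝒜 : ℕ → Submodule A B) (p m : ℕ) :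
    Submodule A (⋀[B]^p (Ω[B⁄A])) :=
  Submodule.span A {ω | ∃ (d : Fin (p + 1) → ℕ) (b : Fin (p + 1) → B),
    (∀ i, b i ∈ 𝒜 (d i)) ∧ (∑ i, d i) = m ∧
    (ω : ExteriorAlgebra B (Ω[B⁄A])) =
      b 0 • ExteriorAlgebra.ιMulti B p (fun j => KaehlerDifferential.D A B (b j.succ)) }

section complexes

variable (𝒜 : ℕ → Submodule A B)
  (iD : ∀ p : ℕ, (⋀[B]^(p + 1) (Ω[B⁄A])) →ₗ[B] (⋀[B]^p (Ω[B⁄A])))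
  (dEx : ∀ p : ℕ, (⋀[B]^p (Ω[B⁄A])) →ₗ[A] (⋀[B]^(p + 1) (Ω[B⁄A])))

/-- The Koszul complex `Kos(M)ₙ`: the degree-`n` homogeneous component of the complex
`(Ω^·_{B/A}, i_D)`, a chain complex of `A`-modules
`⋯ → [Ω^p_{B/A}]ₙ → [Ω^{p-1}_{B/A}]ₙ → ⋯ → [Ω_{B/A}]ₙ → [B]ₙ → 0`. -/
noncomputable def koszulComplexDeg (n : ℕ)
    (hiDsq : ∀ p, (iD p) ∘ₗ (iD (p + 1)) = 0)
    (hiDdeg : ∀ p m, ∀ ω ∈ kaehlerPowerPiece 𝒜 (p + 1) m,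
      ((iD p).restrictScalars A) ω ∈ kaehlerPowerPiece 𝒜 p m) :
    ChainComplex (ModuleCat A) ℕ :=
  ChainComplex.of (fun p => ModuleCat.of A (kaehlerPowerPiece 𝒜 p n))
    (fun p => ModuleCat.ofHom (LinearMap.restrict (((iD p).restrictScalars A)) (hiDdeg p n)))
    (fun p => by
      refine ModuleCat.hom_ext (LinearMap.ext fun x => Subtype.ext ?_)
      have h := LinearMap.congr_fun (hiDsq p) x.1
      exact h)

/-- The De Rham complex `DeRham(M)ₙ`: the degree-`n` homogeneous component of the complex
`(Ω^·_{B/A}, d)`, a cochain complex of `A`-modules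
`0 → [B]ₙ → [Ω_{B/A}]ₙ → ⋯ → [Ω^p_{B/A}]ₙ → ⋯`. -/
noncomputable def deRhamComplexDeg (n : ℕ)
    (hdExsq : ∀ p, (dEx (p + 1)) ∘ₗ (dEx p) = 0)
    (hdExdeg : ∀ p m, ∀ ω ∈ kaehlerPowerPiece 𝒜 p m,
      (dEx p) ω ∈ kaehlerPowerPiece 𝒜 (p + 1) m) :
    CochainComplex (ModuleCat A) ℕ :=
  CochainComplex.of (fun p => ModuleCat.of A (kaehlerPowerPiece 𝒜 p n))
    (fun p => ModuleCat.ofHom (LinearMap.restrict (dEx p) (hdExdeg p n)))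
    (fun p => by
      refine ModuleCat.hom_ext (LinearMap.ext fun x => Subtype.ext ?_)
      have h := LinearMap.congr_fun (hdExsq p) x.1
      exact h)

end complexes

section homological

variable {V : Type*} [Category V] [Preadditive V]

noncomputable def ChainComplex.homotopyIdZeroOf {X : ℕ → V} {d : ∀ n, X (n + 1) ⟶ X n}
    {sq : ∀ n, d (n + 1) ≫ d n = 0} (s : ∀ n, X n ⟶ X (n + 1))
    (hs₀ : s 0 ≫ d 0 = 𝟙 _) (hs : ∀ n, d n ≫ s n + s (n + 1) ≫ d (n + 1) = 𝟙 _) :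
    Homotopy (𝟙 (ChainComplex.of X d sq)) 0 where
  hom i j := if h : i + 1 = j then s i ≫ eqToHom (congrArg X h) else 0
  zero i j hij := dif_neg hij
  comm
    | 0 => by
      rw [Homotopy.prevD_chainComplex, Homotopy.dNext_zero_chainComplex]
      have h₁₀ : ChainComplex.of.d X d 1 0 = d 0 := ChainComplex.of_d X d 0
      simpa [h₁₀] using hs₀.symm
    | n + 1 => by
      rw [Homotopy.prevD_chainComplex, Homotopy.dNext_succ_chainComplex]
      simpa using (hs n).symm

noncomputable def CochainComplex.homotopyIdZeroOf {X : ℕ → V} {d : ∀ n, X n ⟶ X (n + 1)}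
    {sq : ∀ n, d n ≫ d (n + 1) = 0} (s : ∀ n, X (n + 1) ⟶ X n)
    (hs₀ : d 0 ≫ s 0 = 𝟙 _) (hs : ∀ n, s n ≫ d n + d (n + 1) ≫ s (n + 1) = 𝟙 _) :
    Homotopy (𝟙 (CochainComplex.of X d sq)) 0 where
  hom i j := if h : j + 1 = i then eqToHom (congrArg X h.symm) ≫ s j else 0
  zero i j hij := dif_neg hij
  comm
    | 0 => by
      rw [Homotopy.dNext_cochainComplex, Homotopy.prevD_zero_cochainComplex]
      have h₀₁ : CochainComplex.of.d X d 0 1 = d 0 := CochainComplex.of_d X d 0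
      simpa [h₀₁] using hs₀.symm
    | n + 1 => by
      rw [Homotopy.dNext_cochainComplex, Homotopy.prevD_succ_cochainComplex]
      simpa [add_comm] using (hs n).symm

theorem Homotopy.exactAt {ι : Type*} {c : ComplexShape ι} [CategoryWithHomology V]
    {K : HomologicalComplex V c} (h : Homotopy (𝟙 K) 0) (i : ι) : K.ExactAt i := by
  rw [HomologicalComplex.exactAt_iff_isZero_homology, Limits.IsZero.iff_id_eq_zero]
  simpa using h.homologyMap_eq i

end homological

theorem smul_nsmul_eq_self_of_mul_eq_one {R V : Type*} [Semiring R] [AddCommMonoid V]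
    [Module R V] {u : R} {n : ℕ} (hu : u * n = 1) (x : V) : u • n • x = x := by
  rw [← Nat.cast_smul_eq_nsmul R, smul_smul, hu, one_smul]

section wedgeD

variable (A)

open ExteriorAlgebra KaehlerDifferential

theorem wedgeD_cons_mul {p : ℕ} (x y : B) (c : Fin p → B) :
    wedgeD (A := A) (p + 1) (Fin.cons (x * y) c) =
      x • wedgeD (p + 1) (Fin.cons y c) + y • wedgeD (p + 1) (Fin.cons x c) := by
  refine Subtype.ext ?_
  change ιMulti B (p + 1) (D A B ∘ Fin.cons (x * y) c) =
    x • ιMulti B (p + 1) (D A B ∘ Fin.cons y c) + y • ιMulti B (p + 1) (D A B ∘ Fin.cons x c)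
  simp only [Fin.comp_cons, Derivation.leibniz, ← AlternatingMap.coe_multilinearMap,
    MultilinearMap.cons_add, MultilinearMap.cons_smul]

theorem wedgeD_cons_comp_succAbove {p : ℕ} (c : Fin (p + 1) → B) (j : Fin (p + 1)) :
    wedgeD (A := A) (p + 1) (Fin.cons (c j) (c ∘ j.succAbove)) =
      ((-1 : ℤ) ^ (j : ℕ)) • wedgeD (p + 1) c := by
  have hcycle : (Fin.cons (c j) (c ∘ j.succAbove) : Fin (p + 1) → B) = c ∘ ⇑j.cycleRange⁻¹ := by
    funext i
    refine Fin.cases ?_ (fun k => ?_) i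
    · simp [Equiv.Perm.inv_def, Fin.cycleRange_symm_zero]
    · simp [Equiv.Perm.inv_def, Fin.cycleRange_symm_succ]
  refine Subtype.ext ?_
  change ιMulti B (p + 1) (D A B ∘ Fin.cons (c j) (c ∘ j.succAbove)) =
    ((-1 : ℤ) ^ (j : ℕ)) • ιMulti B (p + 1) (D A B ∘ c)
  rw [hcycle, ← Function.comp_assoc, AlternatingMap.map_perm, Equiv.Perm.sign_inv,
    Fin.sign_cycleRange, Units.smul_def]
  simp

end wedgeD

section cartan

variable (δ : Derivation A B B)
  {iD : ∀ p : ℕ, (⋀[B]^(p + 1) (Ω[B⁄A])) →ₗ[B] (⋀[B]^p (Ω[B⁄A]))}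
  (hiD : ∀ (p : ℕ) (c : Fin (p + 1) → B),
      iD p (wedgeD (p + 1) c) =
        ∑ i : Fin (p + 1), ((-1 : ℤ) ^ (i : ℕ)) • (δ (c i) • wedgeD p (c ∘ i.succAbove)))
  {dEx : ∀ p : ℕ, (⋀[B]^p (Ω[B⁄A])) →ₗ[A] (⋀[B]^(p + 1) (Ω[B⁄A]))}
  (hdEx : ∀ (p : ℕ) (b : B) (c : Fin p → B),
      dEx p (b • wedgeD p c) = wedgeD (p + 1) (Fin.cons b c))

section generator

variable {p : ℕ} (b₀ : B) {c : Fin (p + 1) → B} {k : Fin (p + 1) → ℕ}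
  (hc : ∀ j, δ (c j) = k j • c j)

include hiD hdEx hc

theorem dEx_iD_smul_wedgeD :
    dEx p (iD p (b₀ • wedgeD (p + 1) c)) =
      (∑ j, k j) • (b₀ • wedgeD (p + 1) c) +
        ∑ j : Fin (p + 1),
          ((-1 : ℤ) ^ (j : ℕ)) • k j • c j • wedgeD (p + 1) (Fin.cons b₀ (c ∘ j.succAbove)) := by
  rw [map_smul, hiD, Finset.smul_sum, map_sum, Finset.sum_smul, ← Finset.sum_add_distrib]
  refine Finset.sum_congr rfl fun j _ => ?_
  have hsign : ((-1 : ℤ) ^ (j : ℕ)) * (-1) ^ (j : ℕ) = 1 := by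
    rw [← mul_pow, neg_one_mul, neg_neg, one_pow]
  calc dEx p (b₀ • ((-1 : ℤ) ^ (j : ℕ)) • δ (c j) • wedgeD p (c ∘ j.succAbove))
      = ((-1 : ℤ) ^ (j : ℕ)) • k j • dEx p ((b₀ * c j) • wedgeD p (c ∘ j.succAbove)) := by
        rw [hc, ← map_nsmul, ← map_zsmul]
        congr 1
        module
    _ = _ := by
        rw [hdEx, wedgeD_cons_mul, wedgeD_cons_comp_succAbove A c j]
        linear_combination (norm := module) hsign • (k j • b₀ • wedgeD (A := A) (p + 1) c)

theorem iD_dEx_smul_wedgeD {k₀ : ℕ} (hb₀ : δ b₀ = k₀ • b₀) :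
    iD (p + 1) (dEx (p + 1) (b₀ • wedgeD (p + 1) c)) =
      k₀ • (b₀ • wedgeD (p + 1) c) -
        ∑ j : Fin (p + 1),
          ((-1 : ℤ) ^ (j : ℕ)) • k j • c j • wedgeD (p + 1) (Fin.cons b₀ (c ∘ j.succAbove)) := by
  rw [hdEx, hiD, Fin.sum_univ_succ, sub_eq_add_neg, ← Finset.sum_neg_distrib]
  congr 1
  · have hc₀ : (Fin.cons b₀ c : Fin (p + 2) → B) ∘ Fin.succAbove 0 = c := rfl
    rw [Fin.cons_zero, hc₀, hb₀, Fin.val_zero, pow_zero, one_smul, smul_assoc]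
  · refine Finset.sum_congr rfl fun j _ => ?_
    have hcj : (Fin.cons b₀ c : Fin (p + 2) → B) ∘ j.succ.succAbove =
        Fin.cons b₀ (c ∘ j.succAbove) := Fin.cons_comp_succ_succAbove b₀ c j
    rw [Fin.cons_succ, hcj, hc, Fin.val_succ, pow_succ]
    module

theorem dEx_iD_add_iD_dEx_smul_wedgeD {k₀ : ℕ} (hb₀ : δ b₀ = k₀ • b₀) :
    dEx p (iD p (b₀ • wedgeD (p + 1) c)) + iD (p + 1) (dEx (p + 1) (b₀ • wedgeD (p + 1) c)) =
      (k₀ + ∑ j, k j) • (b₀ • wedgeD (p + 1) c) := by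
  rw [dEx_iD_smul_wedgeD δ hiD hdEx b₀ hc, iD_dEx_smul_wedgeD δ hiD hdEx b₀ hc hb₀, add_smul]
  abel

end generator

include hiD hdEx

theorem iD_dEx_smul_wedgeD_zero {b₀ : B} {k₀ : ℕ} (hb₀ : δ b₀ = k₀ • b₀) (c : Fin 0 → B) :
    iD 0 (dEx 0 (b₀ • wedgeD 0 c)) = k₀ • (b₀ • wedgeD 0 c) := by
  rw [hdEx, hiD, Fin.sum_univ_one, Fin.cons_zero, hb₀, Fin.val_zero, pow_zero, one_smul,
    smul_assoc]
  rfl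

variable {𝒜 : ℕ → Submodule A B} (hδ : ∀ n : ℕ, ∀ b ∈ 𝒜 n, δ b = n • b)
include hδ

theorem dEx_iD_add_iD_dEx_of_mem {p n : ℕ} {ω : ⋀[B]^(p + 1) (Ω[B⁄A])}
    (hω : ω ∈ kaehlerPowerPiece 𝒜 (p + 1) n) :
    dEx p (iD p ω) + iD (p + 1) (dEx (p + 1) ω) = n • ω := by
  refine LinearMap.eqOn_span (R := A) (g := n • LinearMap.id)
    (f := dEx p ∘ₗ (iD p).restrictScalars A + (iD (p + 1)).restrictScalars A ∘ₗ dEx (p + 1))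
    ?_ hω
  rintro x ⟨d, b, hb, rfl, hx⟩
  obtain rfl : x = b 0 • wedgeD (p + 1) (fun j => b j.succ) := Subtype.ext hx
  rw [Fin.sum_univ_succ]
  exact dEx_iD_add_iD_dEx_smul_wedgeD δ hiD hdEx (b 0)
    (fun j => hδ _ _ (hb j.succ)) (hδ _ _ (hb 0))

theorem iD_dEx_of_mem {n : ℕ} {ω : ⋀[B]^0 (Ω[B⁄A])} (hω : ω ∈ kaehlerPowerPiece 𝒜 0 n) :
    iD 0 (dEx 0 ω) = n • ω := by
  refine LinearMap.eqOn_span (R := A) (g := n • LinearMap.id)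
    (f := (iD 0).restrictScalars A ∘ₗ dEx 0) ?_ hω
  rintro x ⟨d, b, hb, rfl, hx⟩
  obtain rfl : x = b 0 • wedgeD 0 (fun j => b j.succ) := Subtype.ext hx
  simpa using iD_dEx_smul_wedgeD_zero δ hiD hdEx (hδ _ _ (hb 0)) _

end cartan

section homotopy

variable {𝒜 : ℕ → Submodule A B} (δ : Derivation A B B)
  (hδ : ∀ n : ℕ, ∀ b ∈ 𝒜 n, δ b = n • b)
  {iD : ∀ p : ℕ, (⋀[B]^(p + 1) (Ω[B⁄A])) →ₗ[B] (⋀[B]^p (Ω[B⁄A]))}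
  (hiD : ∀ (p : ℕ) (c : Fin (p + 1) → B),
      iD p (wedgeD (p + 1) c) =
        ∑ i : Fin (p + 1), ((-1 : ℤ) ^ (i : ℕ)) • (δ (c i) • wedgeD p (c ∘ i.succAbove)))
  (hiDsq : ∀ p, (iD p) ∘ₗ (iD (p + 1)) = 0)
  (hiDdeg : ∀ p m, ∀ ω ∈ kaehlerPowerPiece 𝒜 (p + 1) m,
      ((iD p).restrictScalars A) ω ∈ kaehlerPowerPiece 𝒜 p m)
  {dEx : ∀ p : ℕ, (⋀[B]^p (Ω[B⁄A])) →ₗ[A] (⋀[B]^(p + 1) (Ω[B⁄A]))}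
  (hdEx : ∀ (p : ℕ) (b : B) (c : Fin p → B),
      dEx p (b • wedgeD p c) = wedgeD (p + 1) (Fin.cons b c))
  (hdExsq : ∀ p, (dEx (p + 1)) ∘ₗ (dEx p) = 0)
  (hdExdeg : ∀ p m, ∀ ω ∈ kaehlerPowerPiece 𝒜 p m,
      (dEx p) ω ∈ kaehlerPowerPiece 𝒜 (p + 1) m)
  {n : ℕ} {u : A} (hu : u * n = 1)

noncomputable def koszulComplexDegHomotopy :
    Homotopy (𝟙 (koszulComplexDeg 𝒜 iD n hiDsq hiDdeg)) 0 := by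
  unfold koszulComplexDeg
  exact ChainComplex.homotopyIdZeroOf
    (fun p => ModuleCat.ofHom (u • (dEx p).restrict (hdExdeg p n)))
    (by
      refine ModuleCat.hom_ext (LinearMap.ext fun ω => Subtype.ext ?_)
      change iD 0 (u • dEx 0 ω) = ω
      rw [LinearMap.map_smul_of_tower, iD_dEx_of_mem δ hiD hdEx hδ ω.2,
        smul_nsmul_eq_self_of_mul_eq_one hu])
    (fun p => by
      refine ModuleCat.hom_ext (LinearMap.ext fun ω => Subtype.ext ?_)
      change u • dEx p (iD p ω) + iD (p + 1) (u • dEx (p + 1) ω) = ω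
      rw [LinearMap.map_smul_of_tower, ← smul_add, dEx_iD_add_iD_dEx_of_mem δ hiD hdEx hδ ω.2,
        smul_nsmul_eq_self_of_mul_eq_one hu])

noncomputable def deRhamComplexDegHomotopy :
    Homotopy (𝟙 (deRhamComplexDeg 𝒜 dEx n hdExsq hdExdeg)) 0 := by
  unfold deRhamComplexDeg
  exact CochainComplex.homotopyIdZeroOf
    (fun p => ModuleCat.ofHom (u • ((iD p).restrictScalars A).restrict (hiDdeg p n)))
    (by
      refine ModuleCat.hom_ext (LinearMap.ext fun ω => Subtype.ext ?_)
      change u • iD 0 (dEx 0 ω) = ω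
      rw [iD_dEx_of_mem δ hiD hdEx hδ ω.2, smul_nsmul_eq_self_of_mul_eq_one hu])
    (fun p => by
      refine ModuleCat.hom_ext (LinearMap.ext fun ω => Subtype.ext ?_)
      change dEx p (u • iD p ω) + u • iD (p + 1) (dEx (p + 1) ω) = ω
      rw [map_smul, ← smul_add, dEx_iD_add_iD_dEx_of_mem δ hiD hdEx hδ ω.2,
        smul_nsmul_eq_self_of_mul_eq_one hu])

end homotopy

theorem statement2_general [Algebra ℚ A]
    (𝒜 : ℕ → Submodule A B)
    -- the Euler derivation `D`, multiplication by `n` on `Sⁿ M` :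
    (δ : Derivation A B B) (hδ : ∀ n : ℕ, ∀ b ∈ 𝒜 n, δ b = n • b)
    -- the Koszul differential: contraction with `D` :
    (iD : ∀ p : ℕ, (⋀[B]^(p + 1) (Ω[B⁄A])) →ₗ[B] (⋀[B]^p (Ω[B⁄A])))
    (hiD : ∀ (p : ℕ) (c : Fin (p + 1) → B),
      iD p (wedgeD (p + 1) c) =
        ∑ i : Fin (p + 1), ((-1 : ℤ) ^ (i : ℕ)) • (δ (c i) • wedgeD p (c ∘ i.succAbove)))
    (hiDsq : ∀ p, (iD p) ∘ₗ (iD (p + 1)) = 0)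
    (hiDdeg : ∀ p m, ∀ ω ∈ kaehlerPowerPiece 𝒜 (p + 1) m,
      ((iD p).restrictScalars A) ω ∈ kaehlerPowerPiece 𝒜 p m)
    -- the exterior (De Rham) differential :
    (dEx : ∀ p : ℕ, (⋀[B]^p (Ω[B⁄A])) →ₗ[A] (⋀[B]^(p + 1) (Ω[B⁄A])))
    (hdEx : ∀ (p : ℕ) (b : B) (c : Fin p → B),
      dEx p (b • wedgeD p c) = wedgeD (p + 1) (Fin.cons b c))
    (hdExsq : ∀ p, (dEx (p + 1)) ∘ₗ (dEx p) = 0)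
    (hdExdeg : ∀ p m, ∀ ω ∈ kaehlerPowerPiece 𝒜 p m,
      (dEx p) ω ∈ kaehlerPowerPiece 𝒜 (p + 1) m)
    (n : ℕ) (hn : 0 < n) :
    -- `Kos(M)ₙ` is homotopically trivial …
    Nonempty (Homotopy (𝟙 (koszulComplexDeg 𝒜 iD n hiDsq hiDdeg)) 0) ∧
    -- … and `DeRham(M)ₙ` is homotopically trivial …
    Nonempty (Homotopy (𝟙 (deRhamComplexDeg 𝒜 dEx n hdExsq hdExdeg)) 0) ∧
    -- … ; in particular both complexes are acyclic (exact) :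
    (∀ i : ℕ, (koszulComplexDeg 𝒜 iD n hiDsq hiDdeg).ExactAt i) ∧
    (∀ i : ℕ, (deRhamComplexDeg 𝒜 dEx n hdExsq hdExdeg).ExactAt i) := by
  have hu : algebraMap ℚ A (n : ℚ)⁻¹ * n = 1 := by
    rw [← map_natCast (algebraMap ℚ A), ← map_mul, inv_mul_cancel₀ (Nat.cast_ne_zero.mpr hn.ne'),
      map_one]
  have hK := koszulComplexDegHomotopy δ hδ hiD hiDsq hiDdeg hdEx hdExdeg hu
  have hC := deRhamComplexDegHomotopy δ hδ hiD hiDdeg hdEx hdExsq hdExdeg hu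
  exact ⟨⟨hK⟩, ⟨hC⟩, hK.exactAt, hC.exactAt⟩

/-- If `A` is a `ℚ`-algebra then, for every `n > 0`, the complexes
`Kos(M)ₙ` and `DeRham(M)ₙ` are homotopically trivial; in particular they are acyclic. -/
theorem statement2 [Algebra ℚ A]
    (ι : M →ₗ[A] B) (𝒜 : ℕ → Submodule A B) [GradedAlgebra 𝒜]
    (hσ : IsSymmetricAlgebra' ι) (h𝒜 : ∀ n, 𝒜 n = LinearMap.range ι ^ n)
    -- the Euler derivation `D`, multiplication by `n` on `Sⁿ M` :
    (δ : Derivation A B B) (hδ : ∀ n : ℕ, ∀ b ∈ 𝒜 n, δ b = n • b)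
    -- the Koszul differential: contraction with `D` :
    (iD : ∀ p : ℕ, (⋀[B]^(p + 1) (Ω[B⁄A])) →ₗ[B] (⋀[B]^p (Ω[B⁄A])))
    (hiD : ∀ (p : ℕ) (c : Fin (p + 1) → B),
      iD p (wedgeD (p + 1) c) =
        ∑ i : Fin (p + 1), ((-1 : ℤ) ^ (i : ℕ)) • (δ (c i) • wedgeD p (c ∘ i.succAbove)))
    (hiDsq : ∀ p, (iD p) ∘ₗ (iD (p + 1)) = 0)
    (hiDdeg : ∀ p m, ∀ ω ∈ kaehlerPowerPiece 𝒜 (p + 1) m,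
      ((iD p).restrictScalars A) ω ∈ kaehlerPowerPiece 𝒜 p m)
    -- the exterior (De Rham) differential :
    (dEx : ∀ p : ℕ, (⋀[B]^p (Ω[B⁄A])) →ₗ[A] (⋀[B]^(p + 1) (Ω[B⁄A])))
    (hdEx : ∀ (p : ℕ) (b : B) (c : Fin p → B),
      dEx p (b • wedgeD p c) = wedgeD (p + 1) (Fin.cons b c))
    (hdExsq : ∀ p, (dEx (p + 1)) ∘ₗ (dEx p) = 0)
    (hdExdeg : ∀ p m, ∀ ω ∈ kaehlerPowerPiece 𝒜 p m,
      (dEx p) ω ∈ kaehlerPowerPiece 𝒜 (p + 1) m)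
    (n : ℕ) (hn : 0 < n) :
    -- `Kos(M)ₙ` is homotopically trivial …
    Nonempty (Homotopy (𝟙 (koszulComplexDeg 𝒜 iD n hiDsq hiDdeg)) 0) ∧
    -- … and `DeRham(M)ₙ` is homotopically trivial …
    Nonempty (Homotopy (𝟙 (deRhamComplexDeg 𝒜 dEx n hdExsq hdExdeg)) 0) ∧
    -- … ; in particular both complexes are acyclic (exact) :
    (∀ i : ℕ, (koszulComplexDeg 𝒜 iD n hiDsq hiDdeg).ExactAt i) ∧
    (∀ i : ℕ, (deRhamComplexDeg 𝒜 dEx n hdExsq hdExdeg).ExactAt i) :=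
  statement2_general 𝒜 δ hδ iD hiD hiDsq hiDdeg dEx hdEx hdExsq hdExdeg n hn
end

section
/- For all integers n ≥ 1, r ≥ 0 and 0 ≤ p ≤ r+1, the binomial identity C(n+r−p, n)·C(n−1, p) + C(n+r−p+1, n)·C(n−1, p−1) = C(r+1, p)·C(n−p+r, r) holds. -/
set_option linter.unusedTactic false


/-!
# STATEMENT 15

For all integers `n ≥ 1`, `r ≥ 0` and `0 ≤ p ≤ r+1`, the binomial identity
`C(n+r−p, n)·C(n−1, p) + C(n+r−p+1, n)·C(n−1, p−1) = C(r+1, p)·C(n−p+r, r)`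
holds, where `C(a, b)` is the binomial coefficient with the convention `C(a, b) = 0`
if `b < 0` or `b > a`.
-/

/-- The binomial coefficient `C(a, b)` for integer arguments, with the convention that
`C(a, b) = 0` whenever `b < 0` or `b > a`. -/
def intChoose (a b : ℤ) : ℤ :=
  if 0 ≤ b ∧ b ≤ a then (a.toNat).choose b.toNat else 0

open Nat

lemma intChoose_coe (a b : ℕ) : intChoose a b = a.choose b := by
  unfold intChoose
  split
  · simp
  · next h =>
    push_neg at h
    have hba : a < b := by exact_mod_cast h (by positivity)
    rw [Nat.choose_eq_zero_of_lt hba]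
    simp

lemma intChoose_eq (a b : ℤ) (A B : ℕ) (ha : a = A) (hb : b = B) :
    intChoose a b = A.choose B := by
  subst ha hb; exact intChoose_coe A B

lemma key_choose_identity (q m t : ℕ) :
    (q+m+t+2).choose (q+2+m) * (q+1+m).choose (q+1)
      + (q+m+t+3).choose (q+2+m) * (q+1+m).choose q
    = (q+t+2).choose (q+1) * (q+m+t+2).choose (q+1+t) := by
  have h1 : q+2+m ≤ q+m+t+2 := by omega
  have h2 : q+1 ≤ q+1+m := by omega
  have h3 : q+2+m ≤ q+m+t+3 := by omega
  have h4 : q ≤ q+1+m := by omega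
  have h5 : q+1 ≤ q+t+2 := by omega
  have h6 : q+1+t ≤ q+m+t+2 := by omega
  have e1 : q+m+t+2 - (q+2+m) = t := by omega
  have e2 : q+1+m - (q+1) = m := by omega
  have e3 : q+m+t+3 - (q+2+m) = t+1 := by omega
  have e4 : q+1+m - q = m+1 := by omega
  have e5 : q+t+2 - (q+1) = t+1 := by omega
  have e6 : q+m+t+2 - (q+1+t) = m+1 := by omega
  have C1 := Nat.cast_choose ℚ h1
  have C2 := Nat.cast_choose ℚ h2
  have C3 := Nat.cast_choose ℚ h3
  have C4 := Nat.cast_choose ℚ h4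
  have C5 := Nat.cast_choose ℚ h5
  have C6 := Nat.cast_choose ℚ h6
  rw [e1] at C1; rw [e2] at C2; rw [e3] at C3; rw [e4] at C4; rw [e5] at C5; rw [e6] at C6
  have cast_eq : ((((q+m+t+2).choose (q+2+m) * (q+1+m).choose (q+1)
      + (q+m+t+3).choose (q+2+m) * (q+1+m).choose q : ℕ)) : ℚ)
      = (((q+t+2).choose (q+1) * (q+m+t+2).choose (q+1+t) : ℕ) : ℚ) := by
    push_cast
    rw [C1, C2, C3, C4, C5, C6]
    have f1 : ((q+m+t+3)! : ℚ) = (q+m+t+3) * (q+m+t+2)! := by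
      rw [show q+m+t+3 = (q+m+t+2)+1 by omega, Nat.factorial_succ]; push_cast; ring
    have f2 : ((q+2+m)! : ℚ) = (q+m+2) * (q+1+m)! := by
      rw [show q+2+m = (q+1+m)+1 by omega, Nat.factorial_succ]; push_cast; ring
    have f3 : ((q+1)! : ℚ) = (q+1) * q ! := by
      rw [Nat.factorial_succ]; push_cast; ring
    have f4 : ((t+1)! : ℚ) = (t+1) * t ! := by
      rw [Nat.factorial_succ]; push_cast; ring
    have f5 : ((m+1)! : ℚ) = (m+1) * m ! := by
      rw [Nat.factorial_succ]; push_cast; ring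
    have f6 : ((q+t+2)! : ℚ) = (q+t+2) * (q+t+1)! := by
      rw [show q+t+2 = (q+t+1)+1 by omega, Nat.factorial_succ]; push_cast; ring
    rw [f1, f2, f3, f4, f5, f6]
    have nz : ∀ k : ℕ, ((k ! : ℚ)) ≠ 0 := fun k => by
      exact_mod_cast Nat.factorial_ne_zero k
    field_simp
    ring_nf
  exact_mod_cast cast_eq

/-- `C(n+r−p, n)·C(n−1, p) + C(n+r−p+1, n)·C(n−1, p−1)
 = C(r+1, p)·C(n−p+r, r)` for `n ≥ 1`, `r ≥ 0`, `0 ≤ p ≤ r+1`. -/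
theorem statement15 (n r p : ℤ) (hn : 1 ≤ n) (hr : 0 ≤ r) (hp0 : 0 ≤ p) (hp1 : p ≤ r + 1) :
    intChoose (n + r - p) n * intChoose (n - 1) p
      + intChoose (n + r - p + 1) n * intChoose (n - 1) (p - 1)
      = intChoose (r + 1) p * intChoose (n - p + r) r := by
  rcases eq_or_lt_of_le hp0 with hp | hp
  · -- p = 0
    subst hp
    have z1 : intChoose (n - 1) (0 - 1) = 0 := by
      unfold intChoose; rw [if_neg]; omega
    have o1 : intChoose (n - 1) 0 = 1 := by
      unfold intChoose; rw [if_pos ⟨le_refl _, by omega⟩]; simp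
    have o2 : intChoose (r + 1) 0 = 1 := by
      unfold intChoose; rw [if_pos ⟨le_refl _, by omega⟩]; simp
    rw [z1, o1, o2]
    have hmain : intChoose (n + r - 0) n = intChoose (n - 0 + r) r := by
      set N := n.toNat with hN
      set R := r.toNat with hR
      have G1 : intChoose (n + r - 0) n = ((N + R).choose N : ℤ) :=
        intChoose_eq _ _ _ _ (by omega) (by omega)
      have G2 : intChoose (n - 0 + r) r = ((N + R).choose R : ℤ) :=
        intChoose_eq _ _ _ _ (by omega) (by omega)
      rw [G1, G2]
      congr 1
      rw [← Nat.choose_symm (Nat.le_add_left R N)]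
      congr 1
      omega
    rw [hmain]; ring
  · -- 1 ≤ p
    have hp1' : 1 ≤ p := hp
    rcases lt_trichotomy p n with hlt | heq | hgt
    · -- p ≤ n - 1
      rcases eq_or_lt_of_le hp1 with hpr | hpr
      · -- p = r + 1
        have z1 : intChoose (n + r - p) n = 0 := by
          unfold intChoose; rw [if_neg]; omega
        rw [z1, hpr]
        have e1 : n + r - (r+1) + 1 = n := by ring
        have e2 : n - (r+1) + r = n - 1 := by ring
        rw [e1, e2]
        have o1 : intChoose n n = 1 := by
          unfold intChoose; rw [if_pos ⟨by omega, le_refl n⟩]; simp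
        have o2 : intChoose (r+1) (r+1) = 1 := by
          unfold intChoose; rw [if_pos ⟨by omega, le_refl _⟩]; simp
        rw [o1, o2]
        ring_nf
      · -- p ≤ r : main case
        obtain ⟨q, hq⟩ : ∃ q : ℕ, p = (q : ℤ) + 1 := ⟨(p-1).toNat, by omega⟩
        obtain ⟨m, hm⟩ : ∃ m : ℕ, n = (q : ℤ) + 2 + m := ⟨(n-p-1).toNat, by omega⟩
        obtain ⟨t, ht⟩ : ∃ t : ℕ, r = (q : ℤ) + 1 + t := ⟨(r-p).toNat, by omega⟩
        subst hq hm ht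
        have G1 : intChoose ((q:ℤ)+2+m + ((q:ℤ)+1+t) - ((q:ℤ)+1)) ((q:ℤ)+2+m)
            = ((q+m+t+2).choose (q+2+m) : ℤ) :=
          intChoose_eq _ _ _ _ (by push_cast; ring) (by push_cast; ring)
        have G2 : intChoose ((q:ℤ)+2+m - 1) ((q:ℤ)+1)
            = ((q+1+m).choose (q+1) : ℤ) :=
          intChoose_eq _ _ _ _ (by push_cast; ring) (by push_cast; ring)
        have G3 : intChoose ((q:ℤ)+2+m + ((q:ℤ)+1+t) - ((q:ℤ)+1) + 1) ((q:ℤ)+2+m)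
            = ((q+m+t+3).choose (q+2+m) : ℤ) :=
          intChoose_eq _ _ _ _ (by push_cast; ring) (by push_cast; ring)
        have G4 : intChoose ((q:ℤ)+2+m - 1) ((q:ℤ)+1-1)
            = ((q+1+m).choose q : ℤ) :=
          intChoose_eq _ _ _ _ (by push_cast; ring) (by push_cast; ring)
        have G5 : intChoose ((q:ℤ)+1+t + 1) ((q:ℤ)+1)
            = ((q+t+2).choose (q+1) : ℤ) :=
          intChoose_eq _ _ _ _ (by push_cast; ring) (by push_cast; ring)
        have G6 : intChoose ((q:ℤ)+2+m - ((q:ℤ)+1) + ((q:ℤ)+1+t)) ((q:ℤ)+1+t)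
            = ((q+m+t+2).choose (q+1+t) : ℤ) :=
          intChoose_eq _ _ _ _ (by push_cast; ring) (by push_cast; ring)
        rw [G1, G2, G3, G4, G5, G6]
        exact_mod_cast key_choose_identity q m t
    · -- p = n
      subst heq
      have z1 : intChoose (p - 1) p = 0 := by
        unfold intChoose; rw [if_neg]; omega
      have e1 : p + r - p + 1 = r + 1 := by ring
      have e2 : p - p + r = r := by ring
      rw [z1, e1, e2]
      have o1 : intChoose (p-1) (p-1) = 1 := by
        unfold intChoose; rw [if_pos ⟨by omega, le_refl _⟩]; simp
      have o2 : intChoose r r = 1 := by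
        unfold intChoose; rw [if_pos ⟨by omega, le_refl _⟩]; simp
      rw [o1, o2]; ring
    · -- p > n
      have z1 : intChoose (n - 1) p = 0 := by
        unfold intChoose; rw [if_neg]; omega
      have z2 : intChoose (n - 1) (p - 1) = 0 := by
        unfold intChoose; rw [if_neg]; omega
      have z3 : intChoose (n - p + r) r = 0 := by
        unfold intChoose; rw [if_neg]; omega
      rw [z1, z2, z3]; ring
end

section
/- For all integers n ≥ 1, r ≥ 0 and 0 ≤ p ≤ r, one has Σ_{i=0}^p (−1)^i · C(r+1, p−i) · C(n+r−p+i, r) = C(n+r−p, n) · C(n−1, p). (This identity expresses that the two formulas for dim_k H^0(P_r, Ω^p_{P_r}(n)) — the alternating sum coming from the Koszul resolution, and the closed form in Bott's formula — agree.) -/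
open Nat in
/-- The key three-variable binomial identity, proved via factorials in `ℚ`. -/
lemma statement16_key (q t s : ℕ) :
    (q+t+s+2).choose (q+t+2) * (q+t+1).choose (q+1)
      + (q+t+s+3).choose (q+t+2) * (q+t+1).choose q
    = (q+s+2).choose (q+1) * (q+t+s+2).choose (q+s+1) := by
  have h1 : ((q+t+s+2).choose (q+t+2) : ℚ)
      = (q+t+s+2)! / ((q+t+2)! * s !) := by
    rw [Nat.cast_choose ℚ (by omega), show q+t+s+2 - (q+t+2) = s by omega]
  have h2 : ((q+t+1).choose (q+1) : ℚ) = (q+t+1)! / ((q+1)! * t !) := by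
    rw [Nat.cast_choose ℚ (by omega), show q+t+1 - (q+1) = t by omega]
  have h3 : ((q+t+s+3).choose (q+t+2) : ℚ)
      = (q+t+s+3)! / ((q+t+2)! * (s+1)!) := by
    rw [Nat.cast_choose ℚ (by omega), show q+t+s+3 - (q+t+2) = s+1 by omega]
  have h4 : ((q+t+1).choose q : ℚ) = (q+t+1)! / (q ! * (t+1)!) := by
    rw [Nat.cast_choose ℚ (by omega), show q+t+1 - q = t+1 by omega]
  have h5 : ((q+s+2).choose (q+1) : ℚ) = (q+s+2)! / ((q+1)! * (s+1)!) := by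
    rw [Nat.cast_choose ℚ (by omega), show q+s+2 - (q+1) = s+1 by omega]
  have h6 : ((q+t+s+2).choose (q+s+1) : ℚ)
      = (q+t+s+2)! / ((q+s+1)! * (t+1)!) := by
    rw [Nat.cast_choose ℚ (by omega), show q+t+s+2 - (q+s+1) = t+1 by omega]
  have e1 : ((q+t+s+3)! : ℚ) = (q+t+s+3) * (q+t+s+2)! := by
    rw [show q+t+s+3 = (q+t+s+2)+1 by omega, Nat.factorial_succ]; push_cast; ring
  have e2 : ((q+t+2)! : ℚ) = (q+t+2) * (q+t+1)! := by
    rw [show q+t+2 = (q+t+1)+1 by omega, Nat.factorial_succ]; push_cast; ring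
  have e3 : ((q+s+2)! : ℚ) = (q+s+2) * (q+s+1)! := by
    rw [show q+s+2 = (q+s+1)+1 by omega, Nat.factorial_succ]; push_cast; ring
  have e4 : ((s+1)! : ℚ) = (s+1) * s ! := by rw [Nat.factorial_succ]; push_cast; ring
  have e5 : ((t+1)! : ℚ) = (t+1) * t ! := by rw [Nat.factorial_succ]; push_cast; ring
  have e6 : ((q+1)! : ℚ) = (q+1) * q ! := by rw [Nat.factorial_succ]; push_cast; ring
  have : (((q+t+s+2).choose (q+t+2) * (q+t+1).choose (q+1)
      + (q+t+s+3).choose (q+t+2) * (q+t+1).choose q : ℕ) : ℚ)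
      = (((q+s+2).choose (q+1) * (q+t+s+2).choose (q+s+1) : ℕ) : ℚ) := by
    push_cast
    rw [h1, h2, h3, h4, h5, h6, e1, e2, e3, e4, e5, e6]
    have f1 : ((q+t+s+2)! : ℚ) ≠ 0 := Nat.cast_ne_zero.2 (Nat.factorial_ne_zero _)
    have f2 : ((q+t+1)! : ℚ) ≠ 0 := Nat.cast_ne_zero.2 (Nat.factorial_ne_zero _)
    have f3 : ((q+s+1)! : ℚ) ≠ 0 := Nat.cast_ne_zero.2 (Nat.factorial_ne_zero _)
    have f4 : (s ! : ℚ) ≠ 0 := Nat.cast_ne_zero.2 (Nat.factorial_ne_zero _)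
    have f5 : (t ! : ℚ) ≠ 0 := Nat.cast_ne_zero.2 (Nat.factorial_ne_zero _)
    have f6 : (q ! : ℚ) ≠ 0 := Nat.cast_ne_zero.2 (Nat.factorial_ne_zero _)
    have g1 : ((q:ℚ)+t+2) ≠ 0 := by positivity
    have g2 : ((q:ℚ)+1) ≠ 0 := by positivity
    have g3 : ((s:ℚ)+1) ≠ 0 := by positivity
    have g4 : ((t:ℚ)+1) ≠ 0 := by positivity
    field_simp
    ring
  exact_mod_cast this

/-- The Pascal-type step identity used for the induction. -/
lemma statement16_step (m p s : ℕ) :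
    (m+s+1).choose (m+1) * m.choose (p+1) + (m+s+2).choose (m+1) * m.choose p
    = (p+s+2).choose (p+1) * (m+s+1).choose (p+s+1) := by
  rcases lt_trichotomy m p with h | h | h
  · rw [Nat.choose_eq_zero_of_lt (show m < p+1 by omega),
      Nat.choose_eq_zero_of_lt (show m < p by omega),
      Nat.choose_eq_zero_of_lt (show m+s+1 < p+s+1 by omega)]
    ring
  · subst h
    rw [Nat.choose_eq_zero_of_lt (show m < m+1 by omega), Nat.choose_self]
    simp [show (m+s+1).choose (m+s+1) = 1 from Nat.choose_self _]
  · obtain ⟨t, rfl⟩ : ∃ t, m = p + 1 + t := ⟨m - p - 1, by omega⟩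
    rw [show p+1+t+s+1 = p+t+s+2 by omega, show p+1+t+s+2 = p+t+s+3 by omega,
      show p+1+t+1 = p+t+2 by omega, show p+1+t = p+t+1 by omega]
    exact statement16_key p t s

/-- The reindexed (alternating) sum, computed by induction. -/
lemma statement16_Tsum (N R : ℕ) (hN : 1 ≤ N) : ∀ P, P ≤ R →
    (∑ j ∈ Finset.range (P+1), (-1:ℤ)^j * ((R+1).choose j) * ((N+R-j).choose R))
    = (-1)^P * ((N+R-P).choose N) * ((N-1).choose P) := by
  intro P
  induction P with
  | zero =>
    intro _
    simp [Nat.choose_symm_add, Nat.add_comm N R]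
  | succ P ih =>
    intro hP
    rw [Finset.sum_range_succ, ih (by omega)]
    obtain ⟨m, rfl⟩ : ∃ m, N = m + 1 := ⟨N - 1, by omega⟩
    obtain ⟨s, hs⟩ : ∃ s, R = P + 1 + s := ⟨R - P - 1, by omega⟩
    subst hs
    have hZ : (((m+s+1).choose (m+1) : ℤ) * (m.choose (P+1) : ℤ)
        + ((m+s+2).choose (m+1) : ℤ) * (m.choose P : ℤ))
        = ((P+s+2).choose (P+1) : ℤ) * ((m+s+1).choose (P+s+1) : ℤ) := by
      exact_mod_cast congrArg (Nat.cast : ℕ → ℤ) (statement16_step m P s)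
    rw [show m+1+(P+1+s)-(P+1) = m+s+1 by omega,
      show m+1+(P+1+s)-P = m+s+2 by omega,
      show m+1-1 = m by omega,
      show P+1+s+1 = P+s+2 by omega,
      show P+1+s = P+s+1 by omega]
    linear_combination ((-1:ℤ)^P) * hZ

/-- The natural-number version of Statement 16. -/
lemma statement16_nat (N R P : ℕ) (hN : 1 ≤ N) (hP : P ≤ R) :
    (∑ i ∈ Finset.range (P+1), (-1:ℤ)^i * ((R+1).choose (P-i)) * ((N+R-P+i).choose R))
    = ((N+R-P).choose N) * ((N-1).choose P) := by
  have hrefl := Finset.sum_range_reflect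
    (fun j => (-1:ℤ)^j * ((R+1).choose j) * ((N+R-j).choose R)) (P+1)
  simp only [Nat.add_sub_cancel] at hrefl
  have hT := statement16_Tsum N R hN P hP
  have hP2 : (-1:ℤ)^P * (-1:ℤ)^P = 1 := by
    rw [← pow_add]; exact Even.neg_one_pow ⟨P, by omega⟩
  have key2 : (∑ i ∈ Finset.range (P+1),
        (-1:ℤ)^i * ((R+1).choose (P-i)) * ((N+R-P+i).choose R))
      = (-1:ℤ)^P * ∑ j ∈ Finset.range (P+1),
        (-1:ℤ)^j * ((R+1).choose j) * ((N+R-j).choose R) := by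
    rw [← hrefl, Finset.mul_sum]
    apply Finset.sum_congr rfl
    intro i hi
    have hi' : i ≤ P := by simpa [Nat.lt_succ_iff] using hi
    have hsg2 : (-1:ℤ)^(P-i) * (-1:ℤ)^i = (-1:ℤ)^P := by
      rw [← pow_add, show P - i + i = P by omega]
    have h2 : (-1:ℤ)^(P-i) * (-1:ℤ)^(P-i) = 1 := by
      rw [← pow_add]; exact Even.neg_one_pow ⟨P-i, by omega⟩
    rw [show N+R-(P-i) = N+R-P+i by omega]
    linear_combination ((-1:ℤ)^(P-i) * ((R+1).choose (P-i) : ℤ)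
        * ((N+R-P+i).choose R : ℤ)) * hsg2
      - ((-1:ℤ)^i * ((R+1).choose (P-i) : ℤ) * ((N+R-P+i).choose R : ℤ)) * h2
  rw [key2, hT]
  linear_combination (((N+R-P).choose N : ℤ) * ((N-1).choose P : ℤ)) * hP2

/-- `intChoose` agrees with `Nat.choose` of the `toNat`s for nonnegative arguments. -/
lemma intChoose_eq_choose (a b : ℤ) (ha : 0 ≤ a) (hb : 0 ≤ b) :
    intChoose a b = (a.toNat).choose b.toNat := by
  unfold intChoose
  split_ifs with h
  · rfl
  · rw [Nat.choose_eq_zero_of_lt (by omega)]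
    simp

/-- `Σ_{i=0}^p (−1)^i C(r+1, p−i) C(n+r−p+i, r) = C(n+r−p, n)·C(n−1, p)`
for `n ≥ 1`, `r ≥ 0`, `0 ≤ p ≤ r`. -/
theorem statement16 (n r p : ℤ) (hn : 1 ≤ n) (hr : 0 ≤ r) (hp0 : 0 ≤ p) (hp1 : p ≤ r) :
    (∑ i ∈ Finset.range (p.toNat + 1),
        (-1 : ℤ) ^ i * intChoose (r + 1) (p - (i : ℤ)) * intChoose (n + r - p + (i : ℤ)) r)
      = intChoose (n + r - p) n * intChoose (n - 1) p := by
  have h1 : intChoose (n+r-p) n = ((n.toNat + r.toNat - p.toNat).choose n.toNat : ℤ) := by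
    rw [intChoose_eq_choose _ _ (by omega) (by omega),
      show (n+r-p).toNat = n.toNat + r.toNat - p.toNat by omega]
  have h2 : intChoose (n-1) p = (((n.toNat - 1).choose p.toNat : ℕ) : ℤ) := by
    rw [intChoose_eq_choose _ _ (by omega) (by omega),
      show (n-1).toNat = n.toNat - 1 by omega]
  rw [h1, h2, ← statement16_nat n.toNat r.toNat p.toNat (by omega) (by omega)]
  apply Finset.sum_congr rfl
  intro i hi
  have hi' : (i : ℤ) ≤ p := by
    have := Finset.mem_range.1 hi; omega
  rw [intChoose_eq_choose _ _ (by omega) (by omega),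
    intChoose_eq_choose _ _ (by omega) (by omega),
    show (r+1).toNat = r.toNat + 1 by omega,
    show (p - (i:ℤ)).toNat = p.toNat - i by omega,
    show (n+r-p+(i:ℤ)).toNat = n.toNat + r.toNat - p.toNat + i by omega]
end
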